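/- arXiv:0704.1951 — 7 statements merged into one kernel-verified Lean document; each statement's English description precedes it below -/
import Mathlib

section
/- Let K be a field of characteristic different from 2 and 3, let w ∈ K, and let E be the Weierstrass curve y² = x³ + 2w·x² + (1 − 2w²)·x + (2w − 4w³), that is, y² = (x + 2w)(x² + 1 − 2w²). Assume the discriminant of E is nonzero. Then the j-invariant of E equals 1728 if and only if w = 0 or 14w² = 9. -/
/-- Let `K` be a field of characteristic different from 2 and 3, let `w ∈ K`, and let `E`
be the Weierstrass curve `y² = (x + 2w)(x² + 1 − 2w²)`, i.e. with coefficients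
`a₁ = a₃ = 0`, `a₂ = 2w`, `a₄ = 1 − 2w²`, `a₆ = 2w − 4w³`. Assume the discriminant of `E`
is nonzero. Then the `j`-invariant `c₄³/Δ` of `E` equals 1728 if and only if `w = 0` or
`14w² = 9`. -/
theorem j_eq_1728_iff_quotient_curve
    (K : Type*) [Field K] (h2 : (2 : K) ≠ 0) (h3 : (3 : K) ≠ 0) (w : K)
    (E : WeierstrassCurve K)
    (hE : E = ⟨0, 2 * w, 0, 1 - 2 * w ^ 2, 2 * w - 4 * w ^ 3⟩)
    (hΔ : E.Δ ≠ 0) :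
    E.c₄ ^ 3 / E.Δ = 1728 ↔ (w = 0 ∨ 14 * w ^ 2 = 9) := by
  have hc6 : E.c₆ = 2 ^ 7 * w * (14 * w ^ 2 - 9) := by
    subst hE
    simp only [WeierstrassCurve.c₆, WeierstrassCurve.b₂, WeierstrassCurve.b₄,
      WeierstrassCurve.b₆]
    ring
  have key : E.c₄ ^ 3 / E.Δ = 1728 ↔ E.c₆ = 0 := by
    rw [div_eq_iff hΔ]
    constructor
    · intro h
      have : E.c₆ ^ 2 = 0 := by linear_combination h + E.c_relation
      exact pow_eq_zero_iff two_ne_zero |>.mp this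
    · intro h
      linear_combination -E.c_relation + E.c₆ * h
  rw [key, hc6]
  have h2' : (2 : K) ^ 7 ≠ 0 := pow_ne_zero _ h2
  constructor
  · intro h
    rcases mul_eq_zero.mp h with h | h
    · rcases mul_eq_zero.mp h with h | h
      · exact absurd h h2'
      · exact Or.inl h
    · exact Or.inr (by linear_combination h)
  · rintro (rfl | h)
    · ring
    · rw [show 14 * w ^ 2 - 9 = 0 by linear_combination h]; ring
end

section
/- Let K be a field of characteristic different from 2 and 3, let s ∈ K with 2s + 1 ≠ 0, and set b = (12s − 2)/(2s + 1). Let E be the Weierstrass curve y² = (x − 1)(x² + bx + 1) and assume its discriminant is nonzero. If the j-invariant of E equals 1728, then 14s = 9; in particular a := s² satisfies 196·a = 81, i.e. a = (9/14)². -/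
/-- Let `K` be a field of characteristic different from 2 and 3, let `s ∈ K` with
`2s + 1 ≠ 0`, and set `b = (12s − 2)/(2s + 1)`. Let `E` be the Weierstrass curve
`y² = (x − 1)(x² + bx + 1)` and assume its discriminant is nonzero. If the `j`-invariant
`c₄³/Δ` of `E` equals 1728, then `14s = 9`; in particular `a := s²` satisfies
`196·a = 81`. -/
theorem j_eq_1728_implies_param_eq
    (K : Type*) [Field K] (h2 : (2 : K) ≠ 0) (h3 : (3 : K) ≠ 0)
    (s : K) (hs : 2 * s + 1 ≠ 0) (b : K) (hb : b = (12 * s - 2) / (2 * s + 1))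
    (E : WeierstrassCurve K)
    (hE : E = ⟨0, b - 1, 0, 1 - b, -1⟩)
    (hΔ : E.Δ ≠ 0)
    (hj : E.c₄ ^ 3 / E.Δ = 1728) :
    14 * s = 9 ∧ 196 * s ^ 2 = 81 := by
  -- clear denominators
  rw [div_eq_iff hΔ] at hj
  have hb' : b * (2 * s + 1) = 12 * s - 2 := by
    rw [hb, div_mul_cancel₀ _ hs]
  -- c₆ = 0
  have hc6 : E.c₆ ^ 2 = 0 := by
    have : E.c₄ ^ 3 - E.c₆ ^ 2 = 1728 * E.Δ := by
      simp only [WeierstrassCurve.c₄, WeierstrassCurve.c₆, WeierstrassCurve.Δ,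
        WeierstrassCurve.b₂, WeierstrassCurve.b₄, WeierstrassCurve.b₆, WeierstrassCurve.b₈]
      ring
    linear_combination hj - this
  have hc6' : E.c₆ = 0 := pow_eq_zero_iff two_ne_zero |>.mp hc6
  have hfac : (b + 2) ^ 2 * (2 * b - 5) = 0 := by
    have h32 : (32 : K) ≠ 0 := by
      have := pow_ne_zero 5 h2
      norm_num at this
      exact this
    have : (-32 : K) * ((b + 2) ^ 2 * (2 * b - 5)) = E.c₆ := by
      simp only [hE, WeierstrassCurve.c₆, WeierstrassCurve.b₂, WeierstrassCurve.b₄,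
        WeierstrassCurve.b₆]
      ring
    rw [hc6'] at this
    have h32' : (-32 : K) ≠ 0 := neg_ne_zero.mpr h32
    exact (mul_eq_zero.mp this).resolve_left h32' |>.symm ▸ rfl
  rcases mul_eq_zero.mp hfac with h | h
  · -- b = -2, contradiction with Δ ≠ 0
    have hbm2 : b = -2 := by
      have h0 := pow_eq_zero_iff two_ne_zero |>.mp h
      linear_combination h0
    exfalso
    apply hΔ
    simp only [hE, WeierstrassCurve.Δ, WeierstrassCurve.b₂, WeierstrassCurve.b₄,
      WeierstrassCurve.b₆, WeierstrassCurve.b₈, hbm2]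
    ring
  · have h14 : 14 * s = 9 := by
      linear_combination (2 * s + 1) * h - 2 * hb'
    exact ⟨h14, by linear_combination (14 * s + 9) * h14⟩
end

section
/- Let k ≥ 0 be an integer, let q = 2^{2k+1}, and let ℓ > 5 be a prime dividing q² + q + 1 + 2^{k+1}(q + 1). Then the multiplicative order of q modulo ℓ is 12. -/
/-- Let `k ≥ 0` be an integer, let `q = 2^(2k+1)`, and let `ℓ > 5` be a prime dividing
`q² + q + 1 + 2^(k+1)·(q + 1)`. Then the multiplicative order of `q` modulo `ℓ` is 12. -/
theorem orderOf_eq_twelve_char_two_case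
    (k : ℕ) (q : ℕ) (hq : q = 2 ^ (2 * k + 1))
    (ℓ : ℕ) (hℓ : ℓ.Prime) (h5 : 5 < ℓ)
    (hdvd : ℓ ∣ q ^ 2 + q + 1 + 2 ^ (k + 1) * (q + 1)) :
    orderOf (q : ZMod ℓ) = 12 := by
  haveI : Fact ℓ.Prime := ⟨hℓ⟩
  set a : ZMod ℓ := (q : ZMod ℓ) with ha
  have h0 : a ^ 2 + a + 1 + 2 ^ (k + 1) * (a + 1) = 0 := by
    have h := (ZMod.natCast_eq_zero_iff _ ℓ).mpr hdvd
    push_cast at h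
    linear_combination h
  have ht : (2 : ZMod ℓ) ^ (k + 1) * (2 : ZMod ℓ) ^ (k + 1) = 2 * a := by
    rw [ha, hq]
    push_cast
    rw [← pow_add, ← pow_succ']
    ring_nf
  have h4eq : a ^ 4 = a ^ 2 - 1 := by
    linear_combination (a ^ 2 + a + 1 - 2 ^ (k + 1) * (a + 1)) * h0 + (a + 1) ^ 2 * ht
  have h6 : a ^ 6 = -1 := by linear_combination (a ^ 2 + 1) * h4eq
  have h12 : a ^ 12 = 1 := by linear_combination (a ^ 6 - 1) * h6
  have hone : (1 : ZMod ℓ) ≠ -1 := by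
    intro h
    have h2 : (2 : ZMod ℓ) = 0 := by linear_combination h
    have := (ZMod.natCast_eq_zero_iff 2 ℓ).mp (by exact_mod_cast h2)
    have := Nat.le_of_dvd (by norm_num) this
    omega
  have hd12 : orderOf a ∣ 12 := orderOf_dvd_of_pow_eq_one h12
  have hnd6 : ¬ orderOf a ∣ 6 := by
    intro h
    have := orderOf_dvd_iff_pow_eq_one.mp h
    rw [h6] at this
    exact hone this.symm
  have hnd4 : ¬ orderOf a ∣ 4 := by
    intro h
    have h4 : a ^ 4 = 1 := orderOf_dvd_iff_pow_eq_one.mp h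
    have ha2 : a ^ 2 = 2 := by linear_combination h4 - h4eq
    have h9 : (9 : ZMod ℓ) = 0 := by
      have : a ^ 6 = (a ^ 2) ^ 3 := by ring
      rw [h6, ha2] at this
      linear_combination -this
    have hdvd9 : ℓ ∣ 9 := (ZMod.natCast_eq_zero_iff 9 ℓ).mp (by exact_mod_cast h9)
    have hdvd3 : ℓ ∣ 3 := by
      have h9' : ℓ ∣ 3 ^ 2 := by norm_num at hdvd9 ⊢; exact hdvd9
      exact hℓ.dvd_of_dvd_pow h9'
    have := Nat.le_of_dvd (by norm_num) hdvd3
    omega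
  have hle := Nat.le_of_dvd (by norm_num) hd12
  interval_cases h : orderOf a <;> simp_all <;> omega
end

section
/- Let k ≥ 0 be an integer, let q = 5^{2k+1}, and let ℓ > 5 be a prime dividing q² + 3q + 1 + 5^{k+1}(q + 1). Then the multiplicative order of q modulo ℓ is 5. -/
/-- Let `k ≥ 0` be an integer, let `q = 5^(2k+1)`, and let `ℓ > 5` be a prime dividing
`q² + 3q + 1 + 5^(k+1)·(q + 1)`. Then the multiplicative order of `q` modulo `ℓ` is 5. -/
theorem orderOf_eq_five_char_five_case
    (k : ℕ) (q : ℕ) (hq : q = 5 ^ (2 * k + 1))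
    (ℓ : ℕ) (hℓ : ℓ.Prime) (h5 : 5 < ℓ)
    (hdvd : ℓ ∣ q ^ 2 + 3 * q + 1 + 5 ^ (k + 1) * (q + 1)) :
    orderOf (q : ZMod ℓ) = 5 := by
  haveI : Fact ℓ.Prime := ⟨hℓ⟩
  set x : ZMod ℓ := (q : ZMod ℓ) with hx
  have h0 : x ^ 2 + 3 * x + 1 + (5 : ZMod ℓ) ^ (k + 1) * (x + 1) = 0 := by
    have := (ZMod.natCast_eq_zero_iff _ ℓ).mpr hdvd
    push_cast at this
    linear_combination this
  have h5x : (5 : ZMod ℓ) ^ (k + 1) * (5 : ZMod ℓ) ^ (k + 1) = 5 * x := by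
    rw [hx, hq]
    push_cast
    ring
  have h4 : x ^ 4 + x ^ 3 + x ^ 2 + x + 1 = 0 := by
    linear_combination (x ^ 2 + 3 * x + 1 - (5 : ZMod ℓ) ^ (k + 1) * (x + 1)) * h0
      + (x + 1) ^ 2 * h5x
  have hx5 : x ^ 5 = 1 := by linear_combination (x - 1) * h4
  have hxne : x ≠ 1 := by
    intro h
    rw [h] at h4
    have h5z : ((5 : ℕ) : ZMod ℓ) = 0 := by push_cast; linear_combination h4
    have hd : ℓ ∣ 5 := (ZMod.natCast_eq_zero_iff 5 ℓ).mp h5z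
    have := Nat.le_of_dvd (by norm_num) hd
    omega
  haveI : Fact (Nat.Prime 5) := ⟨by norm_num⟩
  exact orderOf_eq_prime hx5 hxne
end

section
/- Let k be a finite field of odd characteristic and let a ∈ k be such that neither a nor 1 − 4a is a square in k. Then the polynomial X⁴ + X² + a is irreducible over k. -/
open Polynomial

private lemma quad_rep {k : Type*} [Field k] (p : k[X]) (hm : p.Monic) (h2 : p.natDegree = 2) :
    p = X ^ 2 + C (p.coeff 1) * X + C (p.coeff 0) := by
  conv_lhs => rw [p.as_sum_range' 3 (by omega)]
  have hc : p.coeff 2 = 1 := by have := hm.coeff_natDegree; rwa [h2] at this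
  simp [Finset.sum_range_succ, hc, ← C_mul_X_pow_eq_monomial]
  ring

/-- Let `k` be a finite field of odd characteristic and let `a ∈ k` be such that neither
`a` nor `1 − 4a` is a square in `k`. Then `X⁴ + X² + a` is irreducible over `k`. -/
theorem irreducible_X_pow_four_add_X_sq_add_C
    (k : Type*) [Field k] [Fintype k] (hodd : ringChar k ≠ 2)
    (a : k) (ha : ¬ IsSquare a) (h4a : ¬ IsSquare (1 - 4 * a)) :
    Irreducible (X ^ 4 + X ^ 2 + C a : Polynomial k) := by
  set p : k[X] := X ^ 4 + X ^ 2 + C a with hp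
  have hmon : p.Monic := by rw [hp]; monicity!
  have hdeg : p.natDegree = 4 := by rw [hp]; compute_degree!
  -- no roots
  have hnr : ∀ r : k, ¬ p.IsRoot r := by
    intro r hr
    have h : r ^ 4 + r ^ 2 + a = 0 := by simpa [hp, IsRoot] using hr
    exact h4a ⟨2 * r ^ 2 + 1, by linear_combination (-4 : k) * h⟩
  rw [hmon.irreducible_iff_natDegree']
  refine ⟨fun h1 => by simp [h1] at hdeg, ?_⟩
  rintro f g hf hg hfg hmem
  rw [hdeg] at hmem
  simp only [Finset.mem_Ioc] at hmem
  have hsum := hf.natDegree_mul hg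
  rw [hfg, hdeg] at hsum
  have hcases : g.natDegree = 1 ∨ g.natDegree = 2 := by omega
  rcases hcases with hgd | hgd
  · -- degree 1: root
    have := hg.eq_X_add_C hgd
    apply hnr (-(g.coeff 0))
    rw [← hfg, IsRoot, eval_mul, this]
    simp
  · -- degree 2
    have hfd : f.natDegree = 2 := by omega
    have hgrep := quad_rep g hg hgd
    have hfrep := quad_rep f hf hfd
    set b := f.coeff 1; set c := f.coeff 0
    set d := g.coeff 1; set e := g.coeff 0
    have key : (X ^ 2 + C b * X + C c) * (X ^ 2 + C d * X + C e) = p := by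
      rw [← hfrep, ← hgrep]; exact hfg
    have expand : (X ^ 2 + C b * X + C c) * (X ^ 2 + C d * X + C e)
        = X ^ 4 + C (b + d) * X ^ 3 + C (c + e + b * d) * X ^ 2
          + C (b * e + c * d) * X + C (c * e) := by
      simp only [C_add, C_mul]; ring
    rw [expand, hp] at key
    have h3 : b + d = 0 := by
      have := congrArg (fun q => Polynomial.coeff q 3) key
      simpa [coeff_X_pow, coeff_C_mul, coeff_C, coeff_X, -C_add, -map_add] using this
    have h2 : c + e + b * d = 1 := by
      have := congrArg (fun q => Polynomial.coeff q 2) key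
      simpa [coeff_X_pow, coeff_C_mul, coeff_C, coeff_X, -C_add, -map_add] using this
    have h1 : b * e + c * d = 0 := by
      have := congrArg (fun q => Polynomial.coeff q 1) key
      simpa [coeff_X_pow, coeff_C_mul, coeff_C, coeff_X, -C_add, -map_add] using this
    have h0 : c * e = a := by
      have := congrArg (fun q => Polynomial.coeff q 0) key
      simpa [coeff_X_pow, coeff_C_mul, coeff_C, coeff_X, -C_add, -map_add] using this
    have hd : d = -b := by linear_combination h3
    rcases mul_eq_zero.mp (show b * (e - c) = 0 by linear_combination h1 - c * hd) with hb | hec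
    · exact h4a ⟨c - e, by linear_combination -(c + e + 1) * h2 + 4 * h0 + (c + e + 1) * d * hb⟩
    · exact ha ⟨c, by linear_combination -h0 + c * hec⟩
end

section
/- Let k be a finite field of odd characteristic and let a ∈ k be a nonsquare such that 1 − 4a is a square in k. Then the polynomial X⁴ + X² + a has exactly two roots in k. -/
/-!
Since the discriminant `1 - 4a` is a square, `X⁴ + X² + a = (X² - z)(X² - w)` with `z + w = -1`
and `zw = a`, so the roots are the square roots of `z` together with those of `w`. For the
quadratic character `χ` there are `χ(z) + 1` square roots of `z`, and as `zw = a` is a nonsquare,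
`χ(z) = -χ(w)`: the two counts add up to `2`.
-/

theorem setOf_pow_four_add_sq_add_eq_union {K : Type*} [CommRing K] [IsDomain K] {a z w : K}
    (hsum : z + w = -1) (hprod : z * w = a) :
    {x : K | x ^ 4 + x ^ 2 + a = 0} = {x | x ^ 2 = z} ∪ {x | x ^ 2 = w} := by
  ext x
  have hfactor : x ^ 4 + x ^ 2 + a = (x ^ 2 - z) * (x ^ 2 - w) := by
    linear_combination x ^ 2 * hsum - hprod
  simp [hfactor, sub_eq_zero]

theorem exists_add_eq_neg_and_mul_eq_of_isSquare_discrim {K : Type*} [Field K]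
    (h2 : (2 : K) ≠ 0) {b c : K} (h : IsSquare (discrim 1 b c)) :
    ∃ z w : K, z + w = -b ∧ z * w = c := by
  obtain ⟨s, hs⟩ := h
  refine ⟨(-b + s) / 2, (-b - s) / 2, by field_simp; ring, ?_⟩
  rw [discrim] at hs
  field_simp
  linear_combination hs

theorem quadraticChar_add_eq_zero_of_not_isSquare_mul {F : Type*} [Field F] [Fintype F]
    [DecidableEq F] {z w : F} (h : ¬IsSquare (z * w)) :
    quadraticChar F z + quadraticChar F w = 0 := by
  have hw : w ≠ 0 := by rintro rfl; simp at h
  have hprod : quadraticChar F z * quadraticChar F w = -1 := by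
    rw [← map_mul, quadraticChar_neg_one_iff_not_isSquare.mpr h]
  linear_combination quadraticChar F w * hprod - quadraticChar F z * quadraticChar_sq_one hw

theorem card_sqrts_union_eq_two_of_not_isSquare_mul {F : Type*} [Field F] [Fintype F]
    (hF : ringChar F ≠ 2) {z w : F} (h : ¬IsSquare (z * w)) :
    Nat.card ↥({x : F | x ^ 2 = z} ∪ {x | x ^ 2 = w}) = 2 := by
  classical
  have hzw : z ≠ w := by rintro rfl; exact h ⟨z, rfl⟩
  have hdisj : Disjoint {x : F | x ^ 2 = z} {x | x ^ 2 = w} :=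
    Set.disjoint_left.mpr fun x hz hw => hzw (hz.symm.trans hw)
  rw [Nat.card_eq_card_toFinset, Set.toFinset_union,
    Finset.card_union_of_disjoint (Set.disjoint_toFinset.mpr hdisj)]
  have hz := quadraticChar_card_sqrts hF z
  have hw := quadraticChar_card_sqrts hF w
  have hsum := quadraticChar_add_eq_zero_of_not_isSquare_mul h
  omega

theorem two_roots_of_X_pow_four_add_X_sq_add_C_general
    (k : Type*) [Field k] [Fintype k]
    (a : k) (ha : ¬ IsSquare a) (h4a : IsSquare (1 - 4 * a)) :
    Nat.card {x : k // x ^ 4 + x ^ 2 + a = 0} = 2 := by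
  have hodd : ringChar k ≠ 2 := fun h => ha (FiniteField.isSquare_of_char_two h a)
  obtain ⟨z, w, hsum, hprod⟩ := exists_add_eq_neg_and_mul_eq_of_isSquare_discrim
    (Ring.two_ne_zero hodd) (b := 1) (c := a) (by rwa [discrim, one_pow, mul_one])
  change Nat.card ↥{x : k | x ^ 4 + x ^ 2 + a = 0} = 2
  rw [setOf_pow_four_add_sq_add_eq_union hsum hprod]
  exact card_sqrts_union_eq_two_of_not_isSquare_mul hodd (hprod ▸ ha)

/-- Let `k` be a finite field of odd characteristic and let `a ∈ k` be a nonsquare such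
that `1 − 4a` is a square in `k`. Then the polynomial `X⁴ + X² + a` has exactly two roots
in `k`. -/
theorem two_roots_of_X_pow_four_add_X_sq_add_C
    (k : Type*) [Field k] [Fintype k] (hodd : ringChar k ≠ 2)
    (a : k) (ha : ¬ IsSquare a) (h4a : IsSquare (1 - 4 * a)) :
    Nat.card {x : k // x ^ 4 + x ^ 2 + a = 0} = 2 :=
  two_roots_of_X_pow_four_add_X_sq_add_C_general k a ha h4a
end

section
/- Let K be a field, let w ∈ K, and let (x, y) ∈ K × K with x ≠ 0 satisfy y² = x⁵ + x³ + w⁴·x. Define X = (x² + w²)/x and Y = y·(x + w)/x². Then Y² = (X + 2w)(X² + 1 − 2w²). -/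
/-- Let `K` be a field, `w ∈ K`, and `(x, y) ∈ K × K` with `x ≠ 0` satisfy
`y² = x⁵ + x³ + w⁴·x`. Define `X = (x² + w²)/x` and `Y = y·(x + w)/x²`. Then
`Y² = (X + 2w)(X² + 1 − 2w²)`. -/
theorem elliptic_quotient_weierstrass_identity
    (K : Type*) [Field K] (w x y : K) (hx : x ≠ 0)
    (h : y ^ 2 = x ^ 5 + x ^ 3 + w ^ 4 * x) :
    (y * (x + w) / x ^ 2) ^ 2 =
      ((x ^ 2 + w ^ 2) / x + 2 * w) *
        (((x ^ 2 + w ^ 2) / x) ^ 2 + 1 - 2 * w ^ 2) := by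
  field_simp
  ring_nf
  rw [h]
  ring
end
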